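/- There is an absolute constant C such that the following holds. Let p and v be probability distributions on [n], let L ⊆ [n], let 0 < ε ≤ 1, and suppose ||p_L - v_L||_2 ≤ ε/(2√n). Let X(1), ..., X(n) be independent with X(i) ~ Poisson(s·p(i)), set Z_1 = Σ_{i∈L} (X(i) - s·v(i))² and t = s²·||p_L - v_L||_2²/4 + s²·ε²/(4n). If s ≥ C · max( n·||p_L||_2 / ε², n^{2/3} / ε^{4/3} ), then P[ |Z_1 - E[Z_1]| ≥ t ] ≤ 0.01. -/

import Mathlib

/-!
`Z₁` is a sum of independent terms `(X i - s v i)²`, so by Chebyshev it suffices to bound its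
variance by `t² / 100`. The factorial moments `E[X (X - 1) ⋯ (X - m + 1)] = r ^ m` of
`X ~ Poisson(r)` give `Var (X - a)² = 2 r² + r (1 + 2 (r - a))² ≤ 2 r + 2 r² + 8 r (r - a)²`.
Summing over `L` and applying Cauchy–Schwarz to `∑ p i (p i - v i)²` yields
`Var Z₁ ≤ 2 s + 2 s² ‖p_L‖² + 8 s³ ‖p_L‖ ‖p_L - v_L‖²`, and for `s ≥ 10⁴ · max (…)` each of
these three terms is at most `t² / 300`, using `t ≥ s² ε² / (4 n)` and
`t² ≥ 4 · (s² ‖p_L - v_L‖² / 4) · (s² ε² / (4 n))`.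
-/

open MeasureTheory ProbabilityTheory Finset Real
open scoped NNReal Nat

/-- `p` is a probability distribution on `[n]` (nonnegative entries summing to `1`). -/
def IsDist {n : ℕ} (p : Fin n → ℝ) : Prop := (∀ i, 0 ≤ p i) ∧ ∑ i, p i = 1

namespace ProbabilityTheory

lemma hasSum_descFactorial_poisson (r : ℝ≥0) (m : ℕ) :
    HasSum (fun k ↦ exp (-r) * r ^ k / k ! * k.descFactorial m) ((r : ℝ) ^ m) := by
  refine (hasSum_nat_add_iff' m).mp ?_
  have hvanish : ∑ k ∈ range m, exp (-r) * r ^ k / k ! * (k.descFactorial m : ℝ) = 0 :=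
    sum_eq_zero fun k hk ↦ by simp [Nat.descFactorial_eq_zero_iff_lt.mpr (mem_range.mp hk)]
  have hshift (j : ℕ) : exp (-r) * r ^ (j + m) / (j + m) ! * ((j + m).descFactorial m : ℝ) =
      r ^ m * (exp (-r) * r ^ j / j !) := by
    have hfac : (j ! : ℝ) * (j + m).descFactorial m = (j + m) ! := by
      have h := Nat.factorial_mul_descFactorial (m.le_add_left j)
      rw [Nat.add_sub_cancel] at h
      exact_mod_cast h
    rw [← hfac, pow_add]
    field_simp
  simpa [hvanish, hshift] using (hasSum_one_poissonMeasure r).mul_left ((r : ℝ) ^ m)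

lemma hasSum_sub_sq_poisson (r : ℝ≥0) (a : ℝ) :
    HasSum (fun k ↦ exp (-r) * r ^ k / k ! * ((k : ℝ) - a) ^ 2) (r + (r - a) ^ 2) := by
  have h := hasSum_descFactorial_poisson r
  convert (h 2).add (((h 1).mul_left (1 - 2 * a)).add ((h 0).mul_left (a ^ 2))) using 1
  · funext k
    rw [Nat.cast_descFactorial_two]
    simp only [Nat.descFactorial_one, Nat.descFactorial_zero, Nat.cast_one]
    ring
  · ring

lemma hasSum_sub_pow_four_poisson (r : ℝ≥0) (a : ℝ) :
    HasSum (fun k ↦ exp (-r) * r ^ k / k ! * ((k : ℝ) - a) ^ 4)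
      (r + 3 * r ^ 2 + 4 * (r - a) * r + 6 * (r - a) ^ 2 * r + (r - a) ^ 4) := by
  have h := hasSum_descFactorial_poisson r
  convert (h 4).add (((h 3).mul_left (6 - 4 * a)).add
    (((h 2).mul_left (7 - 12 * a + 6 * a ^ 2)).add
    (((h 1).mul_left (1 - 4 * a + 6 * a ^ 2 - 4 * a ^ 3)).add ((h 0).mul_left (a ^ 4))))) using 1
  · funext k
    simp only [← descPochhammer_eval_eq_descFactorial, descPochhammer_succ_eval,
      descPochhammer_zero, Polynomial.eval_one]
    push_cast
    ring
  · ring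

lemma integrable_poissonMeasure_of_hasSum {r : ℝ≥0} {f : ℕ → ℝ} {S : ℝ} (hf : 0 ≤ f)
    (h : HasSum (fun k ↦ exp (-r) * r ^ k / k ! * f k) S) : Integrable f (poissonMeasure r) :=
  integrable_poissonMeasure_iff.2 <| by simpa [abs_of_nonneg (hf _)] using h.summable

lemma integral_poissonMeasure_of_hasSum {r : ℝ≥0} {f : ℕ → ℝ} {S : ℝ}
    (h : HasSum (fun k ↦ exp (-r) * r ^ k / k ! * f k) S) : ∫ k, f k ∂poissonMeasure r = S := by
  rw [integral_poissonMeasure]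
  exact h.tsum_eq

lemma memLp_sub_sq_poissonMeasure (r : ℝ≥0) (a : ℝ) :
    MemLp (fun k : ℕ ↦ ((k : ℝ) - a) ^ 2) 2 (poissonMeasure r) := by
  refine (memLp_two_iff_integrable_sq .of_discrete).2 ?_
  simp_rw [← pow_mul]
  exact integrable_poissonMeasure_of_hasSum (fun k ↦ (even_two_mul 2).pow_nonneg _)
    (hasSum_sub_pow_four_poisson r a)

lemma variance_sub_sq_poissonMeasure (r : ℝ≥0) (a : ℝ) :
    Var[fun k : ℕ ↦ ((k : ℝ) - a) ^ 2; poissonMeasure r] =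
      2 * r ^ 2 + r * (1 + 2 * (r - a)) ^ 2 := by
  rw [variance_eq_sub (memLp_sub_sq_poissonMeasure r a)]
  simp only [Pi.pow_apply, ← pow_mul]
  rw [integral_poissonMeasure_of_hasSum (hasSum_sub_pow_four_poisson r a),
    integral_poissonMeasure_of_hasSum (hasSum_sub_sq_poisson r a)]
  ring

section IndependentPoisson

variable {ι Ω : Type*} [MeasurableSpace Ω] {μ : Measure Ω} {X : ι → Ω → ℕ} {r : ι → ℝ≥0}

lemma memLp_sum_sub_sq_of_measurePreserving_poisson
    (hX : ∀ i, MeasurePreserving (X i) μ (poissonMeasure (r i))) (a : ι → ℝ) (s : Finset ι) :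
    MemLp (fun ω ↦ ∑ i ∈ s, ((X i ω : ℝ) - a i) ^ 2) 2 μ :=
  memLp_finsetSum s fun i _ ↦
    (memLp_sub_sq_poissonMeasure (r i) (a i)).comp_measurePreserving (hX i)

lemma variance_sum_sub_sq_of_measurePreserving_poisson [IsProbabilityMeasure μ]
    (hX : ∀ i, MeasurePreserving (X i) μ (poissonMeasure (r i))) (hind : iIndepFun X μ)
    (a : ι → ℝ) (s : Finset ι) :
    Var[fun ω ↦ ∑ i ∈ s, ((X i ω : ℝ) - a i) ^ 2; μ] =
      ∑ i ∈ s, (2 * r i ^ 2 + r i * (1 + 2 * (r i - a i)) ^ 2) := by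
  have hsum := IndepFun.variance_sum (μ := μ) (s := s)
    (X := fun i ↦ (fun k : ℕ ↦ ((k : ℝ) - a i) ^ 2) ∘ X i)
    (fun i _ ↦ (memLp_sub_sq_poissonMeasure (r i) (a i)).comp_measurePreserving (hX i))
    (fun i _ j _ hij ↦ (hind.indepFun hij).comp .of_discrete .of_discrete)
  simp only [Finset.sum_fn, Function.comp_apply] at hsum
  rw [hsum]
  refine sum_congr rfl fun i _ ↦ ?_
  rw [← variance_sub_sq_poissonMeasure]
  exact (hX i).variance_fun_comp (f := fun k : ℕ ↦ ((k : ℝ) - a i) ^ 2)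
    Measurable.of_discrete.aemeasurable

end IndependentPoisson

end ProbabilityTheory

lemma Finset.sum_mul_sq_le_sqrt_mul_sum_sq {ι : Type*} (s : Finset ι) (f g : ι → ℝ) :
    ∑ i ∈ s, f i * g i ^ 2 ≤ √(∑ i ∈ s, f i ^ 2) * ∑ i ∈ s, g i ^ 2 := by
  refine (sum_mul_le_sqrt_mul_sqrt s f (fun i ↦ g i ^ 2)).trans ?_
  gcongr
  exact (sqrt_le_sqrt (sum_sq_le_sq_sum_of_nonneg fun i _ ↦ sq_nonneg (g i))).trans_eq
    (sqrt_sq (sum_nonneg fun i _ ↦ sq_nonneg _))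

lemma sum_variance_sub_sq_poisson_le {ι : Type*} (L : Finset ι) {p : ι → ℝ} (v : ι → ℝ)
    (hp : ∀ i ∈ L, 0 ≤ p i) (hp1 : ∑ i ∈ L, p i ≤ 1) {s : ℝ} (hs : 0 ≤ s) :
    ∑ i ∈ L, (2 * (s * p i) ^ 2 + s * p i * (1 + 2 * (s * p i - s * v i)) ^ 2) ≤
      2 * s + 2 * s ^ 2 * ∑ i ∈ L, p i ^ 2 +
        8 * s ^ 3 * (√(∑ i ∈ L, p i ^ 2) * ∑ i ∈ L, (p i - v i) ^ 2) := by
  have hterm : ∀ i ∈ L, 2 * (s * p i) ^ 2 + s * p i * (1 + 2 * (s * p i - s * v i)) ^ 2 ≤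
      2 * s * p i + 2 * s ^ 2 * p i ^ 2 + 8 * s ^ 3 * (p i * (p i - v i) ^ 2) := by
    intro i hi
    -- `(1 + 2b)² ≤ 2 + 8b²`
    nlinarith [mul_nonneg (mul_nonneg hs (hp i hi)) (sq_nonneg (1 - 2 * (s * p i - s * v i)))]
  calc _ ≤ ∑ i ∈ L, (2 * s * p i + 2 * s ^ 2 * p i ^ 2 + 8 * s ^ 3 * (p i * (p i - v i) ^ 2)) :=
        sum_le_sum hterm
    _ = 2 * s * ∑ i ∈ L, p i + 2 * s ^ 2 * ∑ i ∈ L, p i ^ 2 +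
          8 * s ^ 3 * ∑ i ∈ L, p i * (p i - v i) ^ 2 := by
        simp only [sum_add_distrib, mul_sum]
    _ ≤ _ := by
        have hmass : 2 * s * ∑ i ∈ L, p i ≤ 2 * s := mul_le_of_le_one_right (by positivity) hp1
        have hcs := sum_mul_sq_le_sqrt_mul_sum_sq L p (fun i ↦ p i - v i)
        gcongr

lemma variance_bound_le_threshold_sq {s ε n Q D : ℝ} (hs : 0 < s) (hn : 0 < n)
    (hQ : 0 ≤ Q) (hD : 0 ≤ D) (h1 : 10000 * n * √Q ≤ s * ε ^ 2) (h2 : 10000 ^ 3 * n ^ 2 ≤ s ^ 3 * ε ^ 4) :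
    2 * s + 2 * s ^ 2 * Q + 8 * s ^ 3 * (√Q * D) ≤
      0.01 * (s ^ 2 * D / 4 + s ^ 2 * ε ^ 2 / (4 * n)) ^ 2 := by
  obtain ⟨q, hq, rfl⟩ : ∃ q, 0 ≤ q ∧ q ^ 2 = Q := ⟨√Q, sqrt_nonneg Q, sq_sqrt hQ⟩
  rw [sqrt_sq hq] at h1 ⊢
  set σ := s ^ 2 * D / 4
  set τ := s ^ 2 * ε ^ 2 / (4 * n)
  have hτ : τ * (4 * n) = s ^ 2 * ε ^ 2 := by simp only [τ]; field_simp
  have hτ2 : τ ^ 2 * (16 * n ^ 2) = s ^ 4 * ε ^ 4 := by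
    linear_combination (τ * (4 * n) + s ^ 2 * ε ^ 2) * hτ
  have hσ : 0 ≤ σ := by positivity
  have hτ0 : 0 ≤ τ := by positivity
  have hlin : 600 * s ≤ τ ^ 2 := by
    refine le_of_mul_le_mul_right ?_ (by positivity : 0 < 16 * n ^ 2)
    nlinarith [mul_le_mul_of_nonneg_left h2 hs.le, mul_nonneg hs.le (sq_nonneg n)]
  have hquad : 600 * s ^ 2 * q ^ 2 ≤ τ ^ 2 := by
    refine le_of_mul_le_mul_right ?_ (by positivity : 0 < 16 * n ^ 2)
    nlinarith [mul_le_mul h1 h1 (by positivity) (by positivity), sq_nonneg (s * n * q)]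
  have hcube : 600 * s ^ 3 * (q * D) ≤ σ * τ := by
    refine le_of_mul_le_mul_right ?_ (by positivity : 0 < 4 * n)
    have h := mul_le_mul_of_nonneg_left h1 (by positivity : 0 ≤ s ^ 3 * D / 4)
    calc 600 * s ^ 3 * (q * D) * (4 * n) ≤ s ^ 3 * D / 4 * (10000 * n * q) := by
          nlinarith [mul_nonneg (mul_nonneg (pow_nonneg hs.le 3) hD) (mul_nonneg hn.le hq)]
      _ ≤ s ^ 3 * D / 4 * (s * ε ^ 2) := h
      _ = σ * (τ * (4 * n)) := by rw [hτ]; simp only [σ]; ring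
      _ = σ * τ * (4 * n) := by ring
  nlinarith [sq_nonneg (σ - τ)]

lemma cube_mul_sq_le_of_mul_rpow_div_le {C n ε s : ℝ} (hC : 0 ≤ C) (hn : 0 ≤ n) (hε : 0 < ε)
    (h : C * (n ^ (2 / 3 : ℝ) / ε ^ (4 / 3 : ℝ)) ≤ s) : C ^ 3 * n ^ 2 ≤ s ^ 3 * ε ^ 4 := by
  rw [← mul_div_assoc, div_le_iff₀ (by positivity)] at h
  have hcube := pow_le_pow_left₀ (by positivity) h 3
  rw [mul_pow, mul_pow, ← rpow_mul_natCast hn, ← rpow_mul_natCast hε.le] at hcube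
  norm_num at hcube
  exact_mod_cast hcube

/-- Concentration of the light-element estimator when `v` is close to `p`: there is an
absolute constant `C` such that if `‖p_L - v_L‖₂ ≤ ε/(2√n)` and
`s ≥ C max (n ‖p_L‖₂ / ε²) (n^(2/3) / ε^(4/3))`, then for
`Z₁ = ∑_{i ∈ L} (X i - s v i)²` and `t = s² ‖p_L - v_L‖₂²/4 + s² ε²/(4n)`,
`P(|Z₁ - E[Z₁]| ≥ t) ≤ 0.01`. -/
theorem light_concentration_close :
    ∃ C : ℝ,
      ∀ n : ℕ, 0 < n → ∀ p v : Fin n → ℝ, IsDist p → IsDist v →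
      ∀ L : Finset (Fin n), ∀ ε : ℝ, 0 < ε → ε ≤ 1 →
      Real.sqrt (∑ i ∈ L, (p i - v i) ^ 2) ≤ ε / (2 * Real.sqrt n) →
      ∀ s : ℝ,
        C * max ((n : ℝ) * Real.sqrt (∑ i ∈ L, (p i) ^ 2) / ε ^ 2)
            ((n : ℝ) ^ ((2 : ℝ) / 3) / ε ^ ((4 : ℝ) / 3)) ≤ s →
      ∀ (Ω : Type) (_ : MeasurableSpace Ω) (μ : Measure Ω), IsProbabilityMeasure μ →
      ∀ X : Fin n → Ω → ℕ, (∀ i, Measurable (X i)) →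
        iIndepFun X μ →
        (∀ i, Measure.map (X i) μ = poissonMeasure (Real.toNNReal (s * p i))) →
        (μ {ω | s ^ 2 * (∑ i ∈ L, (p i - v i) ^ 2) / 4 + s ^ 2 * ε ^ 2 / (4 * n) ≤
              |(∑ i ∈ L, ((X i ω : ℝ) - s * v i) ^ 2) -
                ∫ ω', (∑ i ∈ L, ((X i ω' : ℝ) - s * v i) ^ 2) ∂μ|}).toReal ≤ 0.01 := by
  refine ⟨10000, fun n hn p v hp _ L ε hε _ _ s hs Ω _ μ _ X hXm hind hlaw ↦ ?_⟩
  set q := √(∑ i ∈ L, p i ^ 2)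
  set D := ∑ i ∈ L, (p i - v i) ^ 2
  have hn0 : (0 : ℝ) < n := by exact_mod_cast hn
  have hs1 : 10000 * (n * q / ε ^ 2) ≤ s :=
    (mul_le_mul_of_nonneg_left (le_max_left _ _) (by norm_num)).trans hs
  have hs2 : 10000 * ((n : ℝ) ^ ((2 : ℝ) / 3) / ε ^ ((4 : ℝ) / 3)) ≤ s :=
    (mul_le_mul_of_nonneg_left (le_max_right _ _) (by norm_num)).trans hs
  have hs0 : 0 < s := hs2.trans_lt' (by positivity)
  have h1 : 10000 * n * q ≤ s * ε ^ 2 := by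
    rw [← mul_div_assoc, div_le_iff₀ (by positivity), ← mul_assoc] at hs1
    exact hs1
  have h2 := cube_mul_sq_le_of_mul_rpow_div_le (by norm_num) hn0.le hε hs2
  have hX (i : Fin n) : MeasurePreserving (X i) μ (poissonMeasure (s * p i).toNNReal) :=
    ⟨hXm i, hlaw i⟩
  have hvar := variance_sum_sub_sq_of_measurePreserving_poisson hX hind (fun i ↦ s * v i) L
  simp only [coe_toNNReal _ (mul_nonneg hs0.le (hp.1 _))] at hvar
  have hmass : ∑ i ∈ L, p i ≤ 1 := hp.2 ▸ sum_le_univ_sum_of_nonneg hp.1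
  have ht : 0 < s ^ 2 * D / 4 + s ^ 2 * ε ^ 2 / (4 * n) := by positivity
  refine ENNReal.toReal_le_of_le_ofReal (by norm_num) ((meas_ge_le_variance_div_sq
    (memLp_sum_sub_sq_of_measurePreserving_poisson hX (fun i ↦ s * v i) L) ht).trans ?_)
  rw [ENNReal.ofReal_le_ofReal_iff (by norm_num), div_le_iff₀ (by positivity), hvar]
  exact (sum_variance_sub_sq_poisson_le L v (fun i _ ↦ hp.1 i) hmass hs0.le).trans
    (variance_bound_le_threshold_sq hs0 hn0 (sum_nonneg fun i _ ↦ sq_nonneg _)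
      (sum_nonneg fun i _ ↦ sq_nonneg _) h1 h2)
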